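/- arXiv:1905.00500 — 4 statements merged into one kernel-verified Lean document; each statement's English description precedes it below -/
import Mathlib

section
/- Let d ∈ ℝ^p be a grid length vector with d_i > 0 for all i, and for l ∈ ℤ^p let Y_l = ∏_{i=1}^p [l_i d_i, (l_i+1) d_i]. Let y : [a, b] → ℝ^p be continuous with y(a) ∈ Y_l and y(b) ∈ Y_{l'}, where l, l' ∈ ℤ^p satisfy |l_i − l'_i| ≥ 2 for some coordinate i. Then there exist a time t ∈ [a, b] and a box index l'' ∈ ℤ^p with l'' ≠ l and l'' ≠ l' such that y(t) ∈ Y_{l''}. In other words, a continuous trajectory cannot pass between two non-adjacent boxes without visiting a third box. -/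
/-! The trajectory must cross a grid hyperplane `x_i = m d_i` with `m` strictly between `l_i`
and `l'_i`, by the intermediate value theorem in coordinate `i`. The box containing that crossing
point, obtained by rounding every coordinate down to the grid, has `i`-th index `m`, so it is
neither `Y_l` nor `Y_{l'}`. -/

/-- The closed box `Y_l = ∏_{i=1}^p [l_i d_i, (l_i+1) d_i]` of the gridded output space. -/
def gridBox {p : ℕ} (d : Fin p → ℝ) (l : Fin p → ℤ) : Set (Fin p → ℝ) :=
  {y | ∀ i, y i ∈ Set.Icc ((l i : ℝ) * d i) (((l i : ℝ) + 1) * d i)}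

open Set

noncomputable def gridIndex {p : ℕ} (d x : Fin p → ℝ) : Fin p → ℤ :=
  fun j => ⌊x j / d j⌋

theorem mem_gridBox_gridIndex {p : ℕ} {d : Fin p → ℝ} (hd : ∀ i, 0 < d i) (x : Fin p → ℝ) :
    x ∈ gridBox d (gridIndex d x) := by
  intro j
  have hdiv : x j / d j * d j = x j := div_mul_cancel₀ _ (hd j).ne'
  constructor
  · calc (⌊x j / d j⌋ : ℝ) * d j ≤ x j / d j * d j := by gcongr; exacts [(hd j).le, Int.floor_le _]
      _ = x j := hdiv
  · calc x j = x j / d j * d j := hdiv.symm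
      _ ≤ ((⌊x j / d j⌋ : ℝ) + 1) * d j := by
        gcongr; exacts [(hd j).le, (Int.lt_floor_add_one _).le]

theorem gridIndex_apply_of_eq_intCast_mul {p : ℕ} {d x : Fin p → ℝ} {i : Fin p} (hd : d i ≠ 0)
    {m : ℤ} (hx : x i = m * d i) : gridIndex d x i = m := by
  simp [gridIndex, hx, hd]

theorem exists_mem_uIoo_of_two_le_abs_sub {l l' : ℤ} (h : 2 ≤ |l - l'|) : ∃ m, m ∈ uIoo l l' := by
  rcases le_abs.mp h with h | h
  · exact ⟨l' + 1, mem_uIoo_of_gt (by omega) (by omega)⟩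
  · exact ⟨l + 1, mem_uIoo_of_lt (by omega) (by omega)⟩

theorem intCast_mul_mem_uIcc {d u v : ℝ} (hd : 0 ≤ d) {l l' m : ℤ}
    (hu : u ∈ Icc (l * d) ((l + 1) * d)) (hv : v ∈ Icc (l' * d) ((l' + 1) * d))
    (hm : m ∈ uIoo l l') : (m : ℝ) * d ∈ uIcc u v := by
  have cast_mul_le {k k' : ℤ} (h : k ≤ k') : (k : ℝ) * d ≤ k' * d := by gcongr
  rcases le_total l l' with hll' | hl'l
  · rw [uIoo_of_le hll'] at hm
    refine Icc_subset_uIcc ⟨hu.2.trans ?_, (cast_mul_le hm.2.le).trans hv.1⟩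
    exact_mod_cast cast_mul_le (Int.add_one_le_of_lt hm.1)
  · rw [uIoo_of_ge hl'l] at hm
    refine Icc_subset_uIcc' ⟨hv.2.trans ?_, (cast_mul_le hm.2.le).trans hu.1⟩
    exact_mod_cast cast_mul_le (Int.add_one_le_of_lt hm.1)

theorem exists_eq_intCast_mul_of_mem_uIoo {f : ℝ → ℝ} {a b d : ℝ} (hab : a ≤ b) (hd : 0 ≤ d)
    (hf : ContinuousOn f (Icc a b)) {l l' m : ℤ}
    (ha : f a ∈ Icc (l * d) ((l + 1) * d)) (hb : f b ∈ Icc (l' * d) ((l' + 1) * d))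
    (hm : m ∈ uIoo l l') : ∃ t ∈ Icc a b, f t = m * d := by
  rw [← uIcc_of_le hab] at hf ⊢
  exact intermediate_value_uIcc hf (intCast_mul_mem_uIcc hd ha hb hm)

/-- A continuous trajectory cannot pass between two non-adjacent boxes (indices differing
by at least 2 in some coordinate) without visiting a third box. -/
theorem continuous_visits_third_box {p : ℕ} (d : Fin p → ℝ) (hd : ∀ i, 0 < d i)
    (a b : ℝ) (hab : a ≤ b) (y : ℝ → (Fin p → ℝ))
    (hy : ContinuousOn y (Set.Icc a b))
    (l l' : Fin p → ℤ)
    (ha : y a ∈ gridBox d l) (hb : y b ∈ gridBox d l')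
    (hfar : ∃ i, 2 ≤ |l i - l' i|) :
    ∃ t ∈ Set.Icc a b, ∃ l'' : Fin p → ℤ, l'' ≠ l ∧ l'' ≠ l' ∧ y t ∈ gridBox d l'' := by
  obtain ⟨i, hi⟩ := hfar
  obtain ⟨m, hm⟩ := exists_mem_uIoo_of_two_le_abs_sub hi
  obtain ⟨t, ht, hyt⟩ := exists_eq_intCast_mul_of_mem_uIoo hab (hd i).le
    ((continuous_apply i).comp_continuousOn hy) (ha i) (hb i) hm
  have hindex : gridIndex d (y t) i = m := gridIndex_apply_of_eq_intCast_mul (hd i).ne' hyt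
  refine ⟨t, ht, gridIndex d (y t), fun h => ?_, fun h => ?_, mem_gridBox_gridIndex hd (y t)⟩
  · exact left_notMem_uIoo (h ▸ hindex ▸ hm)
  · exact right_notMem_uIoo (h ▸ hindex ▸ hm)
end

section
/- Fix N ≥ 1 and let e_1, …, e_N denote the standard basis vectors of ℤ^N. Define the N-letter words F_N = [e_1, e_2, …, e_N] (Formation Forward) and B_N = [−e_1, −e_2, …, −e_N] (Formation Backward). Let w be any finite word over ℤ^N obtained by concatenating finitely many copies of F_N and B_N in any order. Then for every prefix κ¹ κ² ⋯ κ^i of w and every pair of indices j, k ∈ {1, …, N}, the partial sums satisfy |Σ_{l=1}^{i} (κ^l_j − κ^l_k)| ≤ 1. -/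
/-- Formation Forward for `N` agents: the agents move right one box, one at a time,
in the order `1, …, N` (increments `e_1, …, e_N`). -/
def formF (N : ℕ) : List (Fin N → ℤ) := List.ofFn fun j => Pi.single j (1 : ℤ)

/-- Formation Backward for `N` agents: the agents move left one box, one at a time,
in the order `1, …, N` (increments `-e_1, …, -e_N`). -/
def formB (N : ℕ) : List (Fin N → ℤ) := List.ofFn fun j => Pi.single j (-1 : ℤ)

lemma block_partial_sum (N : ℕ) (c : ℤ) (m : ℕ) (j k : Fin N) :
    ((((List.ofFn fun l : Fin N => Pi.single l c).take m).map
        (fun κ => κ j - κ k)).sum) =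
      (if (j:ℕ) < m then c else 0) - (if (k:ℕ) < m then c else 0) := by
  rw [List.map_take, List.map_ofFn, List.sum_take_ofFn]
  simp only [Function.comp]
  rw [Finset.sum_sub_distrib]
  congr 1 <;>
  · simp only [Pi.single_apply]
    rw [Finset.sum_ite_eq]
    simp

/-- Any concatenation of copies of Formation Forward and Formation Backward satisfies the
`N`-agent formation behavioral constraint: for every prefix and every pair of agents
`j, k`, the partial sums satisfy `|Σ_{l=1}^{i} (κ^l_j - κ^l_k)| ≤ 1`. -/
theorem formation_words_satisfy_constraint_N (N : ℕ) (hN : 1 ≤ N) (w : List (Fin N → ℤ))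
    (hw : ∃ ws : List (List (Fin N → ℤ)),
      (∀ u ∈ ws, u = formF N ∨ u = formB N) ∧ w = ws.flatten) :
    ∀ i : ℕ, ∀ j k : Fin N,
      |(((w.take i).map (fun κ => κ j - κ k)).sum)| ≤ 1 := by
  obtain ⟨ws, hws, rfl⟩ := hw
  induction ws with
  | nil => intro i j k; simp
  | cons u ws ih =>
    intro i j k
    have hu := hws u (by simp)
    have hrest : ∀ v ∈ ws, v = formF N ∨ v = formB N := fun v hv => hws v (by simp [hv])
    have hlen : u.length = N := by
      rcases hu with h | h <;> simp [h, formF, formB]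
    rw [List.flatten_cons, List.take_append, List.map_append, List.sum_append]
    have hblock : ∀ m, ((u.take m).map (fun κ => κ j - κ k)).sum =
        (if (j:ℕ) < m then (1:ℤ) else 0) - (if (k:ℕ) < m then (1:ℤ) else 0) ∨
        ((u.take m).map (fun κ => κ j - κ k)).sum =
        (if (j:ℕ) < m then (-1:ℤ) else 0) - (if (k:ℕ) < m then (-1:ℤ) else 0) := by
      intro m
      rcases hu with h | h
      · left; rw [h]; exact block_partial_sum N 1 m j k
      · right; rw [h]; exact block_partial_sum N (-1) m j k
    by_cases hi : i < N
    · have h2 : i - u.length = 0 := by omega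
      rw [h2]
      simp only [List.take_zero, List.map_nil, List.sum_nil, add_zero]
      rcases hblock i with h | h <;> rw [h] <;> split_ifs <;> simp
    · have hfull : u.take i = u := List.take_of_length_le (by omega)
      rw [hfull]
      have hzero : (u.map (fun κ => κ j - κ k)).sum = 0 := by
        rcases hblock u.length with h | h <;>
        · rw [List.take_of_length_le le_rfl] at h
          rw [h]
          have hj := j.2; have hk := k.2
          simp [hlen, hj, hk]
      rw [hzero, zero_add]
      exact ih hrest (i - u.length) j k
end

section
/- Fix N ≥ 1 and identify ℤ^{3N} with (ℤ^N)³, writing each increment κ as (κ^{(1)}, κ^{(2)}, κ^{(3)}) for the three groups of N coordinates. Let F_N = [e_1, …, e_N] and B_N = [−e_1, …, −e_N] be words over ℤ^N, where e_1, …, e_N are the standard basis vectors. Let w = κ¹ κ² ⋯ κ^m be a finite word over ℤ^{3N} such that (a) every letter of w is nonzero in exactly one of the three groups and zero in the other two, and (b) for each group g ∈ {1, 2, 3}, the subsequence of group-g components of those letters of w that are nonzero in group g is a concatenation of copies of F_N and B_N. Then for every prefix of w, every group g ∈ {1, 2, 3}, and every pair j, k ∈ {1, …, N}, the partial sums satisfy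 |Σ_{l=1}^{i} (κ^{l,(g)}_j − κ^{l,(g)}_k)| ≤ 1. -/
/-- A word over `ℤ^N` is a formation word if it is a concatenation of finitely many
copies of Formation Forward and Formation Backward. -/
def IsFormationWord (N : ℕ) (v : List (Fin N → ℤ)) : Prop :=
  ∃ ws : List (List (Fin N → ℤ)),
    (∀ u ∈ ws, u = formF N ∨ u = formB N) ∧ v = ws.flatten

lemma sum_take_single (N : ℕ) (c : ℤ) (r : ℕ) (j : Fin N) :
    (((List.ofFn (fun l : Fin N => Pi.single l c)).take r).map (fun x => x j)).sum
      = if (j : ℕ) < r then c else 0 := by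
  rw [List.map_take, List.map_ofFn, List.sum_take_ofFn]
  have : ∀ l : Fin N, ((fun x : Fin N → ℤ => x j) ∘ fun l => Pi.single l c) l
      = if j = l then c else 0 := by
    intro l; simp [Pi.single_apply]
  simp_rw [this]
  rw [Finset.sum_ite_eq]
  simp

lemma sum_prefix_single (N : ℕ) (c : ℤ) (u : List (Fin N → ℤ)) (j k : Fin N)
    (hu : u <+: List.ofFn (fun l : Fin N => Pi.single l c)) :
    (u.map (fun x => x j - x k)).sum
      = (if (j : ℕ) < u.length then c else 0) - (if (k : ℕ) < u.length then c else 0) := by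
  have := List.prefix_iff_eq_take.mp hu
  rw [this]
  have hsplit : ∀ v : List (Fin N → ℤ), (v.map (fun x => x j - x k)).sum
      = (v.map (fun x => x j)).sum - (v.map (fun x => x k)).sum := by
    intro v; induction v with
    | nil => simp
    | cons a t ih => simp [ih]; ring
  rw [hsplit, sum_take_single, sum_take_single, ← this]

lemma key (N : ℕ) (j k : Fin N) (ws : List (List (Fin N → ℤ)))
    (hws : ∀ u ∈ ws, u = formF N ∨ u = formB N) :
    ∀ u, u <+: ws.flatten → |(u.map (fun x => x j - x k)).sum| ≤ 1 := by
  induction ws with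
  | nil =>
    intro u hu
    have : u = [] := List.prefix_nil.mp (by simpa using hu)
    rw [this]; simp
  | cons b t ih =>
    intro u hu
    simp only [List.flatten_cons] at hu
    have hb : b = formF N ∨ b = formB N := hws b (by simp)
    have hbc : ∃ c : ℤ, |c| ≤ 1 ∧ b = List.ofFn (fun l : Fin N => Pi.single l c) := by
      rcases hb with h | h
      · exact ⟨1, by norm_num, h⟩
      · exact ⟨-1, by norm_num, h⟩
    obtain ⟨c, hc, hbeq⟩ := hbc
    by_cases hlen : u.length ≤ b.length
    · have hub : u <+: b := by
        have := List.prefix_iff_eq_take.mp hu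
        rw [List.take_append_of_le_length hlen] at this
        rw [this]; exact List.take_prefix _ _
      rw [hbeq] at hub
      rw [sum_prefix_single N c u j k hub]
      rcases lt_or_ge (j : ℕ) u.length with h1 | h1 <;>
        rcases lt_or_ge (k : ℕ) u.length with h2 | h2 <;>
        simp [h1, h2, not_lt.mpr, abs_le.mp hc] <;> omega
    · push_neg at hlen
      have hbu : b <+: u := by
        have h1 : b <+: b ++ t.flatten := List.prefix_append _ _
        rcases List.prefix_or_prefix_of_prefix h1 hu with h | h
        · exact h
        · have := h.length_le; omega
      obtain ⟨u', rfl⟩ := hbu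
      have hu' : u' <+: t.flatten := (List.prefix_append_right_inj b).mp hu
      have hbsum : (b.map (fun x : Fin N → ℤ => x j - x k)).sum = 0 := by
        have : b <+: List.ofFn (fun l : Fin N => Pi.single l c) := by
          rw [hbeq]
        rw [sum_prefix_single N c b j k this, hbeq]
        simp [j.isLt, k.isLt]
      rw [List.map_append, List.sum_append, hbsum, zero_add]
      exact ih (fun v hv => hws v (by simp [hv])) u' hu'


/-- `ℤ^{3N}` is identified with three groups of `N` coordinates (`Fin 3 → Fin N → ℤ`),
one group per world-frame direction.  If every letter of `w` is nonzero in exactly one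
group and, for each group `g`, the subsequence of group-`g` components of the letters
that are nonzero in group `g` is a concatenation of copies of Formation Forward and
Formation Backward, then every prefix of `w` satisfies the formation behavioral
constraint in each group `g` and for each pair of agents `j, k`. -/
theorem parallel_formation_words_satisfy_constraint (N : ℕ) (hN : 1 ≤ N)
    (w : List (Fin 3 → Fin N → ℤ))
    (ha : ∀ κ ∈ w, ∃! g : Fin 3, κ g ≠ 0)
    (hb : ∀ g : Fin 3,
      IsFormationWord N ((w.filter (fun κ => κ g ≠ 0)).map (fun κ => κ g))) :
    ∀ i : ℕ, ∀ g : Fin 3, ∀ j k : Fin N,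
      |(((w.take i).map (fun κ => κ g j - κ g k)).sum)| ≤ 1 := by
  intro i g j k
  obtain ⟨ws, hws, hveq⟩ := hb g
  -- replace sum over take i by sum over filtered take i
  have hfilt : ∀ v : List (Fin 3 → Fin N → ℤ),
      (v.map (fun κ => κ g j - κ g k)).sum
        = ((v.filter (fun κ => κ g ≠ 0)).map (fun κ => κ g j - κ g k)).sum := by
    intro v; induction v with
    | nil => simp
    | cons a t ih =>
      by_cases h : a g ≠ 0
      · simp [List.filter_cons, h, ih]
      · push_neg at h
        simp [List.filter_cons, h, ih]
  rw [hfilt]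
  have hpre : ((w.take i).filter (fun κ => κ g ≠ 0)).map (fun κ => κ g)
      <+: (w.filter (fun κ => κ g ≠ 0)).map (fun κ => κ g) :=
    ((List.take_prefix i w).filter _).map _
  rw [hveq] at hpre
  have := key N j k ws hws _ hpre
  have heq : ((((w.take i).filter (fun κ => κ g ≠ 0)).map (fun κ => κ g)).map
      (fun x => x j - x k)).sum
      = (((w.take i).filter (fun κ => κ g ≠ 0)).map (fun κ => κ g j - κ g k)).sum := by
    rw [List.map_map]; rfl
  rw [← heq]
  exact this
end

section
/- Let k > 0 and d > 0, and let x₁, x₂ : [0, ∞) → ℝ be differentiable with x₁'(t) = x₂(t) and x₂'(t) = −k x₂(t) for all t ≥ 0. Then for all t ≥ 0, |x₁(t) − x₁(0)| ≤ |x₂(0)| / k. Consequently, if |x₂(0)|/k ≤ x₁(0) and x₁(0) ≤ d − |x₂(0)|/k, then x₁(t) ∈ [0, d] for all t ≥ 0, i.e., the output remains in the box [0, d] forever. -/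
/-! The velocity obeys `x₂' = -k x₂`, so `x₂ t = x₂ 0 · e^{-kt}`, and `x₁ + x₂ / k` is a first
integral. Hence `x₁ t - x₁ 0 = x₂ 0 · (1 - e^{-kt}) / k`, whose modulus is at most `|x₂ 0| / k`
because `0 ≤ 1 - e^{-kt} ≤ 1` for `t ≥ 0`. -/

open Real Set

theorem eq_of_hasDerivAt_zero_of_le {E : Type*} [NormedAddCommGroup E] [NormedSpace ℝ E]
    {f : ℝ → E} {a t : ℝ} (hf : ∀ s, a ≤ s → HasDerivAt f 0 s) (ht : a ≤ t) : f t = f a :=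
  constant_of_has_deriv_right_zero
    (fun s hs => (hf s hs.1).continuousAt.continuousWithinAt)
    (fun s hs => (hf s hs.1).hasDerivWithinAt) t ⟨ht, le_rfl⟩

theorem eq_mul_exp_of_hasDerivAt_eq_mul {f : ℝ → ℝ} {c t : ℝ}
    (hf : ∀ s, 0 ≤ s → HasDerivAt f (c * f s) s) (ht : 0 ≤ t) : f t = f 0 * exp (c * t) := by
  have hconst : ∀ s, 0 ≤ s → HasDerivAt (fun s => f s * exp (-c * s)) 0 s := by
    intro s hs
    have hexp : HasDerivAt (fun s => exp (-c * s)) (exp (-c * s) * -c) s := by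
      simpa using ((hasDerivAt_id s).const_mul (-c)).exp
    have h := (hf s hs).mul hexp
    rwa [show c * f s * exp (-c * s) + f s * (exp (-c * s) * -c) = 0 by ring] at h
  have h := eq_of_hasDerivAt_zero_of_le hconst ht
  simp only [mul_zero, exp_zero, mul_one] at h
  rw [← h, mul_assoc, ← exp_add]
  simp

theorem sub_eq_of_hasDerivAt_damped {x₁ x₂ : ℝ → ℝ} {k t : ℝ} (hk : k ≠ 0)
    (h1 : ∀ s, 0 ≤ s → HasDerivAt x₁ (x₂ s) s)
    (h2 : ∀ s, 0 ≤ s → HasDerivAt x₂ (-k * x₂ s) s) (ht : 0 ≤ t) :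
    x₁ t - x₁ 0 = (x₂ 0 - x₂ t) / k := by
  have hconst : ∀ s, 0 ≤ s → HasDerivAt (fun s => x₁ s + x₂ s / k) 0 s := by
    intro s hs
    have h := (h1 s hs).add ((h2 s hs).div_const k)
    rwa [neg_mul, neg_div, mul_div_cancel_left₀ _ hk, add_neg_cancel] at h
  have h : x₁ t + x₂ t / k = x₁ 0 + x₂ 0 / k := eq_of_hasDerivAt_zero_of_le hconst ht
  rw [sub_div]
  linarith

theorem abs_sub_le_of_hasDerivAt_damped {x₁ x₂ : ℝ → ℝ} {k t : ℝ} (hk : 0 < k)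
    (h1 : ∀ s, 0 ≤ s → HasDerivAt x₁ (x₂ s) s)
    (h2 : ∀ s, 0 ≤ s → HasDerivAt x₂ (-k * x₂ s) s) (ht : 0 ≤ t) :
    |x₁ t - x₁ 0| ≤ |x₂ 0| / k := by
  have hdecay : exp (-k * t) ≤ 1 := exp_le_one_iff.2 (by nlinarith)
  have hdisp : x₁ t - x₁ 0 = x₂ 0 * (1 - exp (-k * t)) / k := by
    rw [sub_eq_of_hasDerivAt_damped hk.ne' h1 h2 ht, eq_mul_exp_of_hasDerivAt_eq_mul h2 ht]
    ring
  rw [hdisp, abs_div, abs_of_pos hk, abs_mul, abs_of_nonneg (sub_nonneg.2 hdecay)]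
  gcongr
  exact mul_le_of_le_one_right (abs_nonneg _) (by linarith [exp_pos (-k * t)])

theorem hold_primitive_stays_in_box_general (k d : ℝ) (hk : 0 < k)
    (x₁ x₂ : ℝ → ℝ)
    (h1 : ∀ t : ℝ, 0 ≤ t → HasDerivAt x₁ (x₂ t) t)
    (h2 : ∀ t : ℝ, 0 ≤ t → HasDerivAt x₂ (-k * x₂ t) t) :
    (∀ t : ℝ, 0 ≤ t → |x₁ t - x₁ 0| ≤ |x₂ 0| / k) ∧
      ((|x₂ 0| / k ≤ x₁ 0 ∧ x₁ 0 ≤ d - |x₂ 0| / k) →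
        ∀ t : ℝ, 0 ≤ t → x₁ t ∈ Set.Icc (0 : ℝ) d) := by
  have hbound : ∀ t : ℝ, 0 ≤ t → |x₁ t - x₁ 0| ≤ |x₂ 0| / k := fun t ht =>
    abs_sub_le_of_hasDerivAt_damped hk h1 h2 ht
  refine ⟨hbound, fun ⟨hlow, hhigh⟩ t ht => ?_⟩
  obtain ⟨hleft, hright⟩ := abs_le.1 (hbound t ht)
  constructor <;> linarith

/-- Under the damping feedback `u = -k x₂` (`k > 0`) for the double integrator
`ẋ₁ = x₂`, `ẋ₂ = -k x₂`, the position never moves further than `|x₂(0)|/k` from its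
initial value; consequently, if the initial position is at least `|x₂(0)|/k` away from
both faces of the box `[0, d]`, the output remains in the box forever. -/
theorem hold_primitive_stays_in_box (k d : ℝ) (hk : 0 < k) (hd : 0 < d)
    (x₁ x₂ : ℝ → ℝ)
    (h1 : ∀ t : ℝ, 0 ≤ t → HasDerivAt x₁ (x₂ t) t)
    (h2 : ∀ t : ℝ, 0 ≤ t → HasDerivAt x₂ (-k * x₂ t) t) :
    (∀ t : ℝ, 0 ≤ t → |x₁ t - x₁ 0| ≤ |x₂ 0| / k) ∧
      ((|x₂ 0| / k ≤ x₁ 0 ∧ x₁ 0 ≤ d - |x₂ 0| / k) →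
        ∀ t : ℝ, 0 ≤ t → x₁ t ∈ Set.Icc (0 : ℝ) d) :=
  hold_primitive_stays_in_box_general k d hk x₁ x₂ h1 h2
end
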